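/- Let u, v ∈ ℝ^n and define F : 𝒞_n → ℝ by F(x) = ⟨u,x⟩² ⟨v,x⟩². Then the derivative matrix of F satisfies ‖D^F‖_op ≤ 12 n ‖u‖₂² ‖v‖₂². -/

import Mathlib

noncomputable section

open scoped BigOperators

/-- The point of the Boolean hypercube associated with a Boolean string. -/
def sgnVec {n : ℕ} (b : Fin n → Bool) : Fin n → ℝ := fun i => if b i then 1 else -1

/-- Euclidean inner product on ℝ^n. -/
def dotR {n : ℕ} (u x : Fin n → ℝ) : ℝ := ∑ i, u i * x i

/-- Discrete derivative on the cube: `∂_i F(x) = (F(x^{i+}) − F(x^{i−}))/2`. -/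
def dderiv {n : ℕ} (F : (Fin n → Bool) → ℝ) (i : Fin n) (b : Fin n → Bool) : ℝ :=
  (F (Function.update b i true) - F (Function.update b i false)) / 2

/-- The derivative matrix `D^F_{ij} = max_x |∂_i ∂_j F(x)|`. -/
def derivMat {n : ℕ} (F : (Fin n → Bool) → ℝ) (i j : Fin n) : ℝ :=
  ⨆ b : Fin n → Bool, |dderiv (dderiv F j) i b|

/-- The `ℓ²→ℓ²` operator norm of an `n×n` matrix. -/
def matOpNorm {n : ℕ} (M : Fin n → Fin n → ℝ) : ℝ :=
  sSup { r : ℝ | ∃ x : Fin n → ℝ, (∑ i, x i ^ 2) = 1 ∧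
    r = Real.sqrt (∑ i, (∑ j, M i j * x j) ^ 2) }

/-
Fix `i ≠ j` and write `⟨u,x⟩ = A + x_i u_i + x_j u_j`, `⟨v,x⟩ = B + x_i v_i + x_j v_j`. The mixed
derivative `∂_i ∂_j F(x)` is then
`4AB(u_j v_i + u_i v_j) + 2 v_i v_j (A² + u_i² + u_j²) + 2 u_i u_j (B² + v_i² + v_j²)`,
and Cauchy–Schwarz gives `A² + u_i² + u_j² ≤ n‖u‖²` and `B² + v_i² + v_j² ≤ n‖v‖²`. So `D^F` is
dominated entrywise by `|v| ⊗ (4n‖u‖‖v‖ |u| + 2n‖u‖² |v|) + |u| ⊗ (4n‖u‖‖v‖ |v| + 2n‖v‖² |u|)`,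
a sum of two nonnegative rank-one matrices, each of operator norm at most `6n‖u‖²‖v‖²`.
-/

open Finset Function

variable {n : ℕ}

lemma dderiv_dderiv_apply (F : (Fin n → Bool) → ℝ) (i j : Fin n) (b : Fin n → Bool) :
    dderiv (dderiv F j) i b =
      (F (update (update b i true) j true) - F (update (update b i true) j false)
        - F (update (update b i false) j true) + F (update (update b i false) j false)) / 4 := by
  simp only [dderiv]
  ring

lemma dderiv_dderiv_self (F : (Fin n → Bool) → ℝ) (i : Fin n) (b : Fin n → Bool) :
    dderiv (dderiv F i) i b = 0 := by
  simp [dderiv_dderiv_apply, update_idem]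

lemma abs_derivMat_le {F : (Fin n → Bool) → ℝ} {i j : Fin n} {C : ℝ}
    (h : ∀ b, |dderiv (dderiv F j) i b| ≤ C) : |derivMat F i j| ≤ C := by
  have hnonneg : 0 ≤ derivMat F i j :=
    (abs_nonneg (dderiv (dderiv F j) i fun _ => false)).trans
      (le_ciSup (f := fun b => |dderiv (dderiv F j) i b|) (Set.finite_range _).bddAbove _)
  rw [abs_of_nonneg hnonneg]
  exact ciSup_le h

lemma sgnVec_sq (b : Fin n → Bool) (k : Fin n) : sgnVec b k ^ 2 = 1 := by
  unfold sgnVec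
  split_ifs <;> norm_num

lemma sum_eq_sum_compl_pair_add {α M : Type*} [Fintype α] [DecidableEq α] [AddCommMonoid M]
    {f : α → M} {i j : α} (hij : i ≠ j) :
    ∑ k, f k = ∑ k ∈ {i, j}ᶜ, f k + f i + f j := by
  rw [← sum_compl_add_sum {i, j}, sum_pair hij, add_assoc]

lemma dotR_sgnVec_update_update (u : Fin n → ℝ) (b : Fin n → Bool) {i j : Fin n} (hij : i ≠ j)
    (c d : Bool) :
    dotR u (sgnVec (update (update b i c) j d)) =
      ∑ k ∈ {i, j}ᶜ, u k * sgnVec b k + u i * (if c then 1 else -1)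
        + u j * (if d then 1 else -1) := by
  rw [dotR, sum_eq_sum_compl_pair_add hij]
  congr 2
  · refine sum_congr rfl fun k hk => ?_
    simp only [compl_insert, mem_erase, mem_compl, mem_singleton] at hk
    simp only [sgnVec, update_of_ne hk.1, update_of_ne hk.2]
  · simp [sgnVec, update_of_ne hij]
  · simp [sgnVec]

lemma sq_sum_compl_pair_add_le (u : Fin n → ℝ) (b : Fin n → Bool) {i j : Fin n} (hij : i ≠ j) :
    (∑ k ∈ {i, j}ᶜ, u k * sgnVec b k) ^ 2 + u i ^ 2 + u j ^ 2 ≤ n * ∑ k, u k ^ 2 := by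
  have hcs : (∑ k ∈ {i, j}ᶜ, u k * sgnVec b k) ^ 2 ≤ n * ∑ k ∈ {i, j}ᶜ, u k ^ 2 :=
    calc _ ≤ #({i, j}ᶜ : Finset (Fin n)) * ∑ k ∈ {i, j}ᶜ, (u k * sgnVec b k) ^ 2 :=
          sq_sum_le_card_mul_sum_sq
      _ ≤ n * ∑ k ∈ {i, j}ᶜ, u k ^ 2 := by
          simp only [mul_pow, sgnVec_sq, mul_one]
          gcongr
          simpa using card_le_univ ({i, j}ᶜ : Finset (Fin n))
  have hn : (1 : ℝ) ≤ n := by exact_mod_cast i.pos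
  rw [sum_eq_sum_compl_pair_add (f := fun k => u k ^ 2) hij]
  nlinarith [mul_le_mul_of_nonneg_right hn (by positivity : 0 ≤ u i ^ 2 + u j ^ 2)]

lemma abs_mixedDiff_quartic_le {N U V A B x y z w : ℝ} (hN : 0 ≤ N) (hU : 0 ≤ U) (hV : 0 ≤ V)
    (hA : A ^ 2 + x ^ 2 + y ^ 2 ≤ N * U ^ 2) (hB : B ^ 2 + z ^ 2 + w ^ 2 ≤ N * V ^ 2) :
    |((A + x + y) ^ 2 * (B + z + w) ^ 2 - (A + x - y) ^ 2 * (B + z - w) ^ 2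
        - (A - x + y) ^ 2 * (B - z + w) ^ 2 + (A - x - y) ^ 2 * (B - z - w) ^ 2) / 4|
      ≤ |z| * (4 * N * U * V * |y| + 2 * N * U ^ 2 * |w|)
        + |x| * (4 * N * U * V * |w| + 2 * N * V ^ 2 * |y|) := by
  have hAB : |A * B| ≤ N * U * V := by
    have hsq : (A * B) ^ 2 ≤ (N * U * V) ^ 2 := by
      nlinarith [sq_nonneg x, sq_nonneg y, sq_nonneg z, sq_nonneg w, sq_nonneg A, sq_nonneg B]
    exact (sq_le_sq.mp hsq).trans_eq (abs_of_nonneg (by positivity))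
  rw [show ((A + x + y) ^ 2 * (B + z + w) ^ 2 - (A + x - y) ^ 2 * (B + z - w) ^ 2
        - (A - x + y) ^ 2 * (B - z + w) ^ 2 + (A - x - y) ^ 2 * (B - z - w) ^ 2) / 4
      = 4 * (A * B) * (y * z + x * w) + 2 * (z * w) * (A ^ 2 + x ^ 2 + y ^ 2)
        + 2 * (x * y) * (B ^ 2 + z ^ 2 + w ^ 2) by ring]
  have hA0 : 0 ≤ A ^ 2 + x ^ 2 + y ^ 2 := by positivity
  have hB0 : 0 ≤ B ^ 2 + z ^ 2 + w ^ 2 := by positivity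
  calc _ ≤ 4 * |A * B| * (|y| * |z| + |x| * |w|) + 2 * (|z| * |w|) * (A ^ 2 + x ^ 2 + y ^ 2)
        + 2 * (|x| * |y|) * (B ^ 2 + z ^ 2 + w ^ 2) := by
        refine (abs_add_three _ _ _).trans (add_le_add_three ?_ ?_ ?_)
        · rw [abs_mul, abs_mul, abs_of_pos four_pos]
          gcongr
          exact (abs_add_le _ _).trans_eq (by rw [abs_mul, abs_mul])
        · rw [abs_mul, abs_mul, abs_mul, abs_of_pos two_pos, abs_of_nonneg hA0]
        · rw [abs_mul, abs_mul, abs_mul, abs_of_pos two_pos, abs_of_nonneg hB0]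
    _ ≤ 4 * (N * U * V) * (|y| * |z| + |x| * |w|) + 2 * (|z| * |w|) * (N * U ^ 2)
        + 2 * (|x| * |y|) * (N * V ^ 2) := by gcongr
    _ = _ := by ring

lemma abs_derivMat_quartic_le (u v : Fin n → ℝ) {U V : ℝ} (hU0 : 0 ≤ U) (hV0 : 0 ≤ V)
    (hU : ∑ k, u k ^ 2 ≤ U ^ 2) (hV : ∑ k, v k ^ 2 ≤ V ^ 2) (i j : Fin n) :
    |derivMat (fun b => dotR u (sgnVec b) ^ 2 * dotR v (sgnVec b) ^ 2) i j|
      ≤ |v i| * (4 * n * U * V * |u j| + 2 * n * U ^ 2 * |v j|)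
        + |u i| * (4 * n * U * V * |v j| + 2 * n * V ^ 2 * |u j|) := by
  refine abs_derivMat_le fun b => ?_
  rcases eq_or_ne i j with rfl | hij
  · rw [dderiv_dderiv_self, abs_zero]
    positivity
  have hsq {w : Fin n → ℝ} {W : ℝ} (hW : ∑ k, w k ^ 2 ≤ W ^ 2) :
      (∑ k ∈ {i, j}ᶜ, w k * sgnVec b k) ^ 2 + w i ^ 2 + w j ^ 2 ≤ n * W ^ 2 :=
    (sq_sum_compl_pair_add_le w b hij).trans (by gcongr)
  convert abs_mixedDiff_quartic_le (Nat.cast_nonneg n) hU0 hV0 (hsq hU) (hsq hV) using 2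
  simp only [dderiv_dderiv_apply, dotR_sgnVec_update_update _ _ hij]
  norm_num
  ring

lemma matOpNorm_le {M : Fin n → Fin n → ℝ} {C : ℝ} (hC : 0 ≤ C)
    (h : ∀ x : Fin n → ℝ, ∑ i, x i ^ 2 = 1 → ∑ i, (∑ j, M i j * x j) ^ 2 ≤ C ^ 2) :
    matOpNorm M ≤ C := by
  refine Real.sSup_le ?_ hC
  rintro _ ⟨x, hx, rfl⟩
  exact Real.sqrt_le_iff.mpr ⟨hC, h x hx⟩

lemma sum_mul_abs_le_norm (q : EuclideanSpace ℝ (Fin n)) {x : Fin n → ℝ}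
    (hx : ∑ i, x i ^ 2 = 1) : ∑ j, q j * |x j| ≤ ‖q‖ := by
  simpa [sq_abs, hx, EuclideanSpace.norm_eq] using
    Real.sum_mul_le_sqrt_mul_sqrt univ q fun j => |x j|

lemma matOpNorm_le_of_abs_le_sum_mul {ι : Type*} [Fintype ι] {M : Fin n → Fin n → ℝ}
    (p q : ι → EuclideanSpace ℝ (Fin n)) (hp : ∀ k i, 0 ≤ p k i)
    (hM : ∀ i j, |M i j| ≤ ∑ k, p k i * q k j) :
    matOpNorm M ≤ ∑ k, ‖p k‖ * ‖q k‖ := by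
  refine matOpNorm_le (by positivity) fun x hx => ?_
  set w : EuclideanSpace ℝ (Fin n) := ∑ k, ‖q k‖ • p k
  have hrow (i : Fin n) : |∑ j, M i j * x j| ≤ w i :=
    calc |∑ j, M i j * x j| ≤ ∑ j, (∑ k, p k i * q k j) * |x j| := by
          refine (abs_sum_le_sum_abs _ _).trans (sum_le_sum fun j _ => ?_)
          rw [abs_mul]
          gcongr
          exact hM i j
      _ = ∑ k, p k i * ∑ j, q k j * |x j| := by
          simp only [sum_mul, mul_sum, mul_assoc]
          exact sum_comm
      _ ≤ ∑ k, p k i * ‖q k‖ := by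
          gcongr with k
          · exact hp k i
          · exact sum_mul_abs_le_norm (q k) hx
      _ = w i := by simp [w, mul_comm]
  calc ∑ i, (∑ j, M i j * x j) ^ 2 ≤ ∑ i, w i ^ 2 :=
        sum_le_sum fun i _ => (sq_abs _).symm.trans_le (pow_le_pow_left₀ (abs_nonneg _) (hrow i) 2)
    _ = ‖w‖ ^ 2 := (EuclideanSpace.real_norm_sq_eq w).symm
    _ ≤ (∑ k, ‖p k‖ * ‖q k‖) ^ 2 := by
        gcongr
        exact (norm_sum_le _ _).trans_eq (by simp [norm_smul, mul_comm])

/-- Derivative-matrix bound for `F(x) = ⟨u,x⟩²⟨v,x⟩²`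
(first part of Lemma `vectorproductdob` of the paper). -/
theorem derivMat_quartic (n : ℕ) (u v : Fin n → ℝ) :
    matOpNorm (derivMat (fun b => dotR u (sgnVec b) ^ 2 * dotR v (sgnVec b) ^ 2)) ≤
      12 * n * (∑ i, u i ^ 2) * (∑ i, v i ^ 2) := by
  set a : EuclideanSpace ℝ (Fin n) := WithLp.toLp 2 fun i => |u i|
  set b : EuclideanSpace ℝ (Fin n) := WithLp.toLp 2 fun i => |v i|
  have ha : ‖a‖ ^ 2 = ∑ i, u i ^ 2 := by simp [a, EuclideanSpace.real_norm_sq_eq]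
  have hb : ‖b‖ ^ 2 = ∑ i, v i ^ 2 := by simp [b, EuclideanSpace.real_norm_sq_eq]
  calc _ ≤ ‖b‖ * ‖(4 * n * ‖a‖ * ‖b‖) • a + (2 * n * ‖a‖ ^ 2) • b‖
        + ‖a‖ * ‖(4 * n * ‖a‖ * ‖b‖) • b + (2 * n * ‖b‖ ^ 2) • a‖ := by
        simpa [Fin.sum_univ_two] using matOpNorm_le_of_abs_le_sum_mul ![b, a]
          ![(4 * n * ‖a‖ * ‖b‖) • a + (2 * n * ‖a‖ ^ 2) • b,
            (4 * n * ‖a‖ * ‖b‖) • b + (2 * n * ‖b‖ ^ 2) • a]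
          (by simp [Fin.forall_fin_two, a, b]) fun i j => by
            simpa [Fin.sum_univ_two, a, b] using
              abs_derivMat_quartic_le u v (norm_nonneg a) (norm_nonneg b) ha.ge hb.ge i j
    _ ≤ ‖b‖ * (4 * n * ‖a‖ * ‖b‖ * ‖a‖ + 2 * n * ‖a‖ ^ 2 * ‖b‖)
        + ‖a‖ * (4 * n * ‖a‖ * ‖b‖ * ‖b‖ + 2 * n * ‖b‖ ^ 2 * ‖a‖) := by
        gcongr <;> exact (norm_add_le _ _).trans_eq (by simp [norm_smul])
    _ = 12 * n * ‖a‖ ^ 2 * ‖b‖ ^ 2 := by ring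
    _ = _ := by rw [ha, hb]
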